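/- Let d, d_c be anticommuting differentials on a complex: d² = d_c² = 0 and d d_c = −d_c d, with adjoints δ, δ_c, and suppose δ d_c + d_c δ = 0. Suppose the Hodge decomposition holds: every form γ decomposes as γ = dτ + η + δξ with η harmonic (dη = δη = 0) and harmonic forms are also d_c-closed. If α = d_c γ and dα = 0, then α = d d_c(−τ) for some τ; i.e., every d_c-exact, d-closed form is d d_c-exact. -/
import Mathlib


open scoped RealInnerProductSpace

/-- Abstract `dd_c`-Lemma: given anticommuting differentials `d`, `dc` with adjoints `δ`, `δc`,
with `δ dc + dc δ = 0` and a Hodge decomposition in which harmonic elements are `dc`-closed,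
every `dc`-exact and `d`-closed element is `d dc`-exact. -/
theorem stmt_12 {H : Type*} [NormedAddCommGroup H] [InnerProductSpace ℝ H]
    (d dc δ δc : H →ₗ[ℝ] H)
    (hd2 : ∀ x, d (d x) = 0) (hdc2 : ∀ x, dc (dc x) = 0)
    (hanti : ∀ x, d (dc x) = -dc (d x))
    (hdadj : ∀ x y, ⟪d x, y⟫ = ⟪x, δ y⟫) (hdcadj : ∀ x y, ⟪dc x, y⟫ = ⟪x, δc y⟫)
    (hδdc : ∀ x, δ (dc x) + dc (δ x) = 0)
    (hHodge : ∀ γ : H, ∃ τ η ξ : H,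
      γ = d τ + η + δ ξ ∧ d η = 0 ∧ δ η = 0 ∧ dc η = 0) :
    ∀ α γ : H, α = dc γ → d α = 0 → ∃ β : H, α = d (dc β) := by
  intro α γ hα hdα
  obtain ⟨τ, η, ξ, hγ, hdη, hδη, hdcη⟩ := hHodge γ
  have hαsplit : α = dc (d τ) + dc (δ ξ) := by
    rw [hα, hγ]; simp [map_add, hdcη]
  have hswap : dc (δ ξ) = - δ (dc ξ) := by
    exact eq_neg_of_add_eq_zero_right (hδdc ξ)
  -- d of the first piece vanishes
  have h1 : d (dc (d τ)) = 0 := by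
    rw [hanti (d τ), hd2, map_zero, neg_zero]
  -- hence d δ dc ξ = 0
  have h2 : d (δ (dc ξ)) = 0 := by
    have := hdα
    rw [hαsplit, map_add, h1, zero_add, hswap, map_neg, neg_eq_zero] at this
    exact this
  -- inner product argument: δ dc ξ = 0
  have h3 : δ (dc ξ) = 0 := by
    have : ⟪δ (dc ξ), δ (dc ξ)⟫ = 0 := by
      calc ⟪δ (dc ξ), δ (dc ξ)⟫ = ⟪d (δ (dc ξ)), dc ξ⟫ := by
            rw [hdadj (δ (dc ξ)) (dc ξ)]
        _ = 0 := by rw [h2, inner_zero_left]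
    exact inner_self_eq_zero.mp this
  refine ⟨-τ, ?_⟩
  rw [hαsplit, hswap, h3, neg_zero, add_zero]
  simp [hanti]
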